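/- arXiv:1609.08844 — 9 statements merged into one kernel-verified Lean document; each statement's English description precedes it below -/
import Mathlib

section
/- If A ⊆ ℝ^n is monovex and R ⊆ ℝ^n is an open box whose faces are parallel to the axes (i.e., R = ∏_{i=1}^n (a_i, b_i)), then the Minkowski sum A + R = {a + r : a ∈ A, r ∈ R} is monovex. -/
open Pointwise

/-- A set `A` in `ℝ^ι` is monovex if any two of its points are connected by a
continuous path inside `A`, each of whose coordinate functions is monotone. -/
def Monovex {ι : Type*} (A : Set (ι → ℝ)) : Prop :=
  ∀ x ∈ A, ∀ y ∈ A, ∃ γ : unitInterval → ι → ℝ,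
    Continuous γ ∧ γ 0 = x ∧ γ 1 = y ∧ (∀ t, γ t ∈ A) ∧
    ∀ i, Monotone (fun t => γ t i) ∨ Antitone (fun t => γ t i)

/-!
Work coordinate by coordinate. Given a coordinatewise monotone path `γ` in `A` and offsets
`u, v` in the box, the `i`-th coordinate of the new path is the affine interpolation `L` from
`γ 0 i + u i` to `γ 1 i + v i`, clamped between `γ t i + min (u i) (v i)` and
`γ t i + max (u i) (v i)`. If `L` runs in the same direction as `γ · i`, the clamp is monotone
in that direction; if not, `L` already lies between the two bounds, so the clamp is `L` itself.
-/

open Set unitInterval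

lemma monotone_or_antitone_affine (x y : ℝ) :
    Monotone (fun t : I => x + t * (y - x)) ∨ Antitone (fun t : I => x + t * (y - x)) := by
  rcases le_total x y with h | h
  · exact Or.inl fun t u htu => by
      have : (t : ℝ) * (y - x) ≤ u * (y - x) := mul_le_mul_of_nonneg_right htu (by linarith)
      linarith
  · exact Or.inr fun t u htu => by
      have : (t : ℝ) * (y - x) ≥ u * (y - x) := mul_le_mul_of_nonpos_right htu (by linarith)
      linarith

lemma max_min_eq_of_mem_uIcc {x y r s : ℝ} (h : y ∈ uIcc (x + r) (x + s)) :
    max (x + min r s) (min y (x + max r s)) = y := by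
  rw [uIcc, mem_Icc, min_add_add_left, max_add_add_left] at h
  rw [min_eq_left h.2, max_eq_right h.1]

theorem exists_continuous_monotone_or_antitone_offset {g : I → ℝ} (hg : Continuous g)
    (hgm : Monotone g ∨ Antitone g) (r s : ℝ) :
    ∃ δ : I → ℝ, Continuous δ ∧ δ 0 = g 0 + r ∧ δ 1 = g 1 + s ∧
      (∀ t, δ t - g t ∈ uIcc r s) ∧ (Monotone δ ∨ Antitone δ) := by
  set L : I → ℝ := fun t => (g 0 + r) + t * ((g 1 + s) - (g 0 + r)) with hL
  have hL0 : L 0 = g 0 + r := by simp [hL]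
  have hL1 : L 1 = g 1 + s := by simp [hL]
  set δ : I → ℝ := fun t => max (g t + min r s) (min (L t) (g t + max r s))
  have hδL {t : I} (h : L t ∈ uIcc (g t + r) (g t + s)) : δ t = L t := max_min_eq_of_mem_uIcc h
  refine ⟨δ, by fun_prop, ?_, ?_, ?_, ?_⟩
  · rw [hδL (hL0 ▸ left_mem_uIcc), hL0]
  · rw [hδL (hL1 ▸ right_mem_uIcc), hL1]
  · intro t
    have hlo : g t + min r s ≤ δ t := le_max_left _ _
    have hhi : δ t ≤ g t + max r s :=
      max_le (by linarith [min_le_max (a := r) (b := s)]) (min_le_right _ _)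
    exact ⟨by linarith, by linarith⟩
  · rcases monotone_or_antitone_affine (g 0 + r) (g 1 + s) with hLm | hLm <;>
      rcases hgm with hgm | hgm
    · exact Or.inl <| (hgm.add_const _).max (hLm.min (hgm.add_const _))
    · refine Or.inl <| (funext fun t => hδL ?_ : δ = L) ▸ hLm
      refine mem_uIcc_of_le ?_ ?_
      · linarith [hgm (nonneg' : 0 ≤ t), hLm (nonneg' : 0 ≤ t)]
      · linarith [hgm (le_one' : t ≤ 1), hLm (le_one' : t ≤ 1)]
    · refine Or.inr <| (funext fun t => hδL ?_ : δ = L) ▸ hLm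
      refine mem_uIcc_of_ge ?_ ?_
      · linarith [hgm (le_one' : t ≤ 1), hLm (le_one' : t ≤ 1)]
      · linarith [hgm (nonneg' : 0 ≤ t), hLm (nonneg' : 0 ≤ t)]
    · exact Or.inr <| (hgm.add_const _).max (hLm.min (hgm.add_const _))

theorem Monovex.add_pi_ordConnected {ι : Type*} {A : Set (ι → ℝ)} (hA : Monovex A)
    {S : ι → Set ℝ} (hS : ∀ i, (S i).OrdConnected) : Monovex (A + pi univ S) := by
  rintro _ ⟨p, hp, u, hu, rfl⟩ _ ⟨q, hq, v, hv, rfl⟩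
  obtain ⟨γ, hγc, rfl, rfl, hγA, hγm⟩ := hA p hp q hq
  choose δ hδc hδ0 hδ1 hδγ hδm using fun i => exists_continuous_monotone_or_antitone_offset
    ((continuous_apply i).comp hγc) (hγm i) (u i) (v i)
  refine ⟨fun t i => δ i t, continuous_pi hδc, funext hδ0, funext hδ1, fun t => ?_, hδm⟩
  refine ⟨γ t, hγA t, fun i => δ i t - γ t i, fun i _ => ?_, by ext; simp⟩
  exact (hS i).uIcc_subset (hu i trivial) (hv i trivial) (hδγ i t)

theorem monovex_add_open_box {n : ℕ} (A : Set (Fin n → ℝ)) (hA : Monovex A)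
    (a b : Fin n → ℝ) :
    Monovex (A + Set.pi Set.univ fun i => Set.Ioo (a i) (b i)) :=
  hA.add_pi_ordConnected fun _ => ordConnected_Ioo
end

section
/- If A ⊆ ℝ^n is monovex and R ⊆ ℝ^n is a closed box whose faces are parallel to the axes (i.e., R = ∏_{i=1}^n [a_i, b_i] with a_i ≤ b_i), then the Minkowski sum A + R is monovex. -/
open Pointwise

/-!
Write the two points as `u + r` and `v + s` with `u, v ∈ A` and `r, s` in the box, and let `γ`
be a coordinatewise monotone path in `A` from `u` to `v`. The box part of the new path is built
one coordinate at a time: for `g = γ · i` and `ℓ` the segment from `g 0 + r i` to `g 1 + s i`,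
take `σ = ℓ - g` clamped to `[[r i, s i]]`. If `g` and `ℓ` move in the same direction, so does
`g + σ = max (g + min (r i) (s i)) (min (g + max (r i) (s i)) ℓ)`; otherwise `ℓ - g` is monotone,
hence never leaves `[[r i, s i]]`, and `g + σ = ℓ`.
-/

open Set AffineMap

lemma add_max_min_sub (g x m M : ℝ) :
    g + max m (min M (x - g)) = max (g + m) (min (g + M) x) := by
  rw [← max_add_add_left, ← min_add_add_left, add_sub_cancel]

lemma max_min_eq_self_of_mem_uIcc {p q x : ℝ} (hx : x ∈ uIcc p q) :
    max (min p q) (min (max p q) x) = x := by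
  rw [min_eq_right hx.2, max_eq_right hx.1]

lemma mem_uIcc_of_monotone_or_antitone {φ : unitInterval → ℝ} (hφ : Monotone φ ∨ Antitone φ)
    (t : unitInterval) : φ t ∈ uIcc (φ 0) (φ 1) := by
  rcases hφ with hφ | hφ
  · exact Icc_subset_uIcc ⟨hφ (unitInterval.nonneg t), hφ (unitInterval.le_one t)⟩
  · exact Icc_subset_uIcc' ⟨hφ (unitInterval.le_one t), hφ (unitInterval.nonneg t)⟩

lemma monotone_or_antitone_lineMap (u v : ℝ) :
    Monotone (fun t : unitInterval => lineMap u v (t : ℝ)) ∨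
      Antitone (fun t : unitInterval => lineMap u v (t : ℝ)) := by
  rcases le_total u v with h | h
  · exact .inl ((lineMap_mono h).comp (Subtype.mono_coe _))
  · exact .inr ((lineMap_anti h).comp_monotone (Subtype.mono_coe _))

theorem exists_path_mem_uIcc_add_monotone_or_antitone {g : unitInterval → ℝ} (hg : Continuous g)
    (hgm : Monotone g ∨ Antitone g) (p q : ℝ) :
    ∃ σ : unitInterval → ℝ, Continuous σ ∧ σ 0 = p ∧ σ 1 = q ∧ (∀ t, σ t ∈ uIcc p q) ∧
      (Monotone (g + σ) ∨ Antitone (g + σ)) := by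
  set ℓ : unitInterval → ℝ := fun t => lineMap (g 0 + p) (g 1 + q) (t : ℝ) with hℓ_def
  have hφ0 : ℓ 0 - g 0 = p := by simp [hℓ_def]
  have hφ1 : ℓ 1 - g 1 = q := by simp [hℓ_def]
  refine ⟨fun t => max (min p q) (min (max p q) (ℓ t - g t)), by fun_prop, ?_, ?_,
    fun t => ⟨le_max_left _ _, max_le min_le_max (min_le_left _ _)⟩, ?_⟩
  · simp only [hφ0, max_min_eq_self_of_mem_uIcc left_mem_uIcc]
  · simp only [hφ1, max_min_eq_self_of_mem_uIcc right_mem_uIcc]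
  have h_band : (g + fun t => max (min p q) (min (max p q) (ℓ t - g t))) =
      fun t => max (g t + min p q) (min (g t + max p q) (ℓ t)) :=
    funext fun t => add_max_min_sub _ _ _ _
  have h_inside (hφ : Monotone (ℓ - g) ∨ Antitone (ℓ - g)) :
      (g + fun t => max (min p q) (min (max p q) (ℓ t - g t))) = ℓ := by
    funext t
    have := mem_uIcc_of_monotone_or_antitone hφ t
    simp only [Pi.sub_apply, hφ0, hφ1] at this
    simp [max_min_eq_self_of_mem_uIcc this]
  rcases hgm, monotone_or_antitone_lineMap (g 0 + p) (g 1 + q) with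
    ⟨hg | hg, hℓ | hℓ⟩
  · exact .inl (h_band ▸ (hg.add_const _).max ((hg.add_const _).min hℓ))
  · have hφ : Antitone (ℓ - g) := fun s t hst => sub_le_sub (hℓ hst) (hg hst)
    rw [h_inside (.inr hφ)]
    exact .inr hℓ
  · have hφ : Monotone (ℓ - g) := fun s t hst => sub_le_sub (hℓ hst) (hg hst)
    rw [h_inside (.inl hφ)]
    exact .inl hℓ
  · exact .inr (h_band ▸ (hg.add_const _).max ((hg.add_const _).min hℓ))

theorem Monovex.add_univ_pi {ι : Type*} {A : Set (ι → ℝ)} (hA : Monovex A) {S : ι → Set ℝ}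
    (hS : ∀ i, (S i).OrdConnected) : Monovex (A + univ.pi S) := by
  rintro _ ⟨u, hu, r, hr, rfl⟩ _ ⟨v, hv, s, hs, rfl⟩
  obtain ⟨γ, hγ, rfl, rfl, hγA, hγm⟩ := hA u hu v hv
  choose σ hσ hσ0 hσ1 hσS hσm using fun i => exists_path_mem_uIcc_add_monotone_or_antitone
    ((continuous_apply i).comp hγ) (hγm i) (r i) (s i)
  refine ⟨γ + fun t i => σ i t, hγ.add (continuous_pi hσ), ?_, ?_, fun t => ?_, hσm⟩
  · ext i; simp [hσ0]
  · ext i; simp [hσ1]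
  · exact add_mem_add (hγA t) fun i _ =>
      (hS i).uIcc_subset (hr i trivial) (hs i trivial) (hσS i t)

theorem monovex_add_closed_box_general {n : ℕ} (A : Set (Fin n → ℝ)) (hA : Monovex A)
    (a b : Fin n → ℝ) :
    Monovex (A + Set.pi Set.univ fun i => Set.Icc (a i) (b i)) :=
  hA.add_univ_pi fun _ => ordConnected_Icc

theorem monovex_add_closed_box {n : ℕ} (A : Set (Fin n → ℝ)) (hA : Monovex A)
    (a b : Fin n → ℝ) (hab : ∀ i, a i ≤ b i) :
    Monovex (A + Set.pi Set.univ fun i => Set.Icc (a i) (b i)) :=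
  monovex_add_closed_box_general A hA a b
end

section
/- Let A ⊆ ℝ^3 be the union of the two line segments [(0,0,0),(0,1,1)] and [(0,1,1),(1,1,2)], and let B ⊆ ℝ^3 be the line segment [(0,0,0),(-1,-1,2)]. Then the Minkowski sum A + B is not monovex. In particular, the Minkowski sum of a monovex set and a convex set need not be monovex. -/
open Pointwise

/-! The points `(0,0,0)` and `(0,0,4)` lie in `A + B`. A monotone path between them keeps its
first two coordinates at `0`, while by the intermediate value theorem its third coordinate takes
every value in `[0, 4]`; so a monovex `A + B` would contain `(0,0,2)`, which it does not. -/

lemma unitInterval.eq_of_monotone_or_antitone {α : Type*} [PartialOrder α] {f : unitInterval → α}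
    {c : α} (hf : Monotone f ∨ Antitone f) (h0 : f 0 = c) (h1 : f 1 = c) (t : unitInterval) :
    f t = c := by
  rcases hf with hf | hf
  · exact le_antisymm (h1 ▸ hf unitInterval.le_one') (h0 ▸ hf unitInterval.nonneg')
  · exact le_antisymm (h0 ▸ hf unitInterval.nonneg') (h1 ▸ hf unitInterval.le_one')

lemma Monovex.update_mem_of_mem_uIcc {ι : Type*} [DecidableEq ι] {A : Set (ι → ℝ)}
    (hA : Monovex A) {x : ι → ℝ} {i : ι} {a b c : ℝ}
    (ha : Function.update x i a ∈ A) (hb : Function.update x i b ∈ A) (hc : c ∈ Set.uIcc a b) :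
    Function.update x i c ∈ A := by
  obtain ⟨γ, hγ, hγ0, hγ1, hγA, hγmono⟩ := hA _ ha _ hb
  have hγ_off : ∀ t, ∀ j ≠ i, γ t j = x j := fun t j hj =>
    unitInterval.eq_of_monotone_or_antitone (hγmono j)
      (by rw [hγ0, Function.update_of_ne hj]) (by rw [hγ1, Function.update_of_ne hj]) t
  have hrange : Set.uIcc a b ⊆ Set.range fun t => γ t i := by
    have hconn := (isPreconnected_range ((continuous_apply i).comp hγ)).ordConnected
    refine hconn.uIcc_subset ⟨0, ?_⟩ ⟨1, ?_⟩ <;> simp [hγ0, hγ1]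
  obtain ⟨t, ht⟩ := hrange hc
  convert hγA t using 1
  ext j
  rcases eq_or_ne j i with rfl | hj
  · simp [ht]
  · simp [Function.update_of_ne hj, hγ_off t j hj]

lemma update_zero_two_mem_add :
    Function.update (0 : Fin 3 → ℝ) 2 0 ∈ (segment ℝ (![0,0,0] : Fin 3 → ℝ) ![0,1,1] ∪
        segment ℝ (![0,1,1] : Fin 3 → ℝ) ![1,1,2]) +
      segment ℝ (![0,0,0] : Fin 3 → ℝ) ![-1,-1,2] := by
  rw [show Function.update (0 : Fin 3 → ℝ) 2 0 = ![0,0,0] + ![0,0,0] by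
    ext j; fin_cases j <;> simp]
  exact Set.add_mem_add (Or.inl (left_mem_segment ℝ _ _)) (left_mem_segment ℝ _ _)

lemma update_four_two_mem_add :
    Function.update (0 : Fin 3 → ℝ) 2 4 ∈ (segment ℝ (![0,0,0] : Fin 3 → ℝ) ![0,1,1] ∪
        segment ℝ (![0,1,1] : Fin 3 → ℝ) ![1,1,2]) +
      segment ℝ (![0,0,0] : Fin 3 → ℝ) ![-1,-1,2] := by
  rw [show Function.update (0 : Fin 3 → ℝ) 2 4 = ![1,1,2] + ![-1,-1,2] by
    ext j; fin_cases j <;> norm_num [Function.update_apply] <;> decide]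
  exact Set.add_mem_add (Or.inr (right_mem_segment ℝ _ _)) (right_mem_segment ℝ _ _)

lemma update_two_two_notMem_add :
    Function.update (0 : Fin 3 → ℝ) 2 2 ∉ (segment ℝ (![0,0,0] : Fin 3 → ℝ) ![0,1,1] ∪
        segment ℝ (![0,1,1] : Fin 3 → ℝ) ![1,1,2]) +
      segment ℝ (![0,0,0] : Fin 3 → ℝ) ![-1,-1,2] := by
  rintro ⟨p, hp, q, ⟨u, v, hu, hv, huv, rfl⟩, hpq⟩
  have h0 := congrFun hpq 0
  have h1 := congrFun hpq 1
  have h2 := congrFun hpq 2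
  rcases hp with ⟨s, r, hs, hr, hsr, rfl⟩ | ⟨s, r, hs, hr, hsr, rfl⟩ <;>
    simp only [Pi.add_apply, Pi.smul_apply, smul_eq_mul, Matrix.cons_val_zero, Matrix.cons_val_one,
      Matrix.cons_val_two, Matrix.head_cons, Matrix.tail_cons, Function.update_apply, Pi.zero_apply,
      Fin.reduceEq, if_true, if_false] at h0 h1 h2 <;> linarith

theorem minkowski_sum_not_monovex :
    ¬ Monovex ((segment ℝ (![0,0,0] : Fin 3 → ℝ) ![0,1,1] ∪
        segment ℝ (![0,1,1] : Fin 3 → ℝ) ![1,1,2]) +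
      segment ℝ (![0,0,0] : Fin 3 → ℝ) ![-1,-1,2]) := fun hA =>
  update_two_two_notMem_add <|
    hA.update_mem_of_mem_uIcc update_zero_two_mem_add update_four_two_mem_add (by norm_num)
end

section
/- Let A ⊆ ℝ^3 be the union of the segments [(0,0,0),(0,1,1)] and [(0,1,1),(1,1,2)], and let B be the segment [(0,0,0),(-1,-1,2)]. Then the intersection of A + B with the line {x ∈ ℝ^3 : x_1 = x_2 = 0} equals the two-point set {(0,0,0), (0,0,4)}. -/
/-!
Parametrise the two legs of `A` as `(0, s, s)` and `(s, 1, 1 + s)` and `B` as `(-u, -u, 2u)`.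
On the line `x₀ = x₁ = 0` the two linear equations force `s = u = 0` on the first leg and
`s = u = 1` on the second, i.e. the points `(0, 0, 0)` and `(0, 0, 4)`.
-/

open Pointwise

lemma first_leg_add_segment_inter_line :
    (segment ℝ (![0,0,0] : Fin 3 → ℝ) ![0,1,1] + segment ℝ (![0,0,0] : Fin 3 → ℝ) ![-1,-1,2]) ∩
      {x : Fin 3 → ℝ | x 0 = 0 ∧ x 1 = 0} = {![0,0,0]} := by
  ext x
  constructor
  · rintro ⟨⟨a, ha, b, hb, rfl⟩, h0, h1⟩
    rw [segment_eq_image] at ha hb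
    obtain ⟨s, -, rfl⟩ := ha
    obtain ⟨u, -, rfl⟩ := hb
    simp only [Pi.add_apply, Pi.smul_apply, smul_eq_mul, Matrix.cons_val_zero,
      Matrix.cons_val_one] at h0 h1
    have hu : u = 0 := by linarith
    have hs : s = 0 := by linarith
    subst hu hs
    simp
  · rintro rfl
    exact ⟨⟨_, left_mem_segment ℝ _ _, _, left_mem_segment ℝ _ _, by simp⟩, by simp⟩

lemma second_leg_add_segment_inter_line :
    (segment ℝ (![0,1,1] : Fin 3 → ℝ) ![1,1,2] + segment ℝ (![0,0,0] : Fin 3 → ℝ) ![-1,-1,2]) ∩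
      {x : Fin 3 → ℝ | x 0 = 0 ∧ x 1 = 0} = {![0,0,4]} := by
  ext x
  constructor
  · rintro ⟨⟨a, ha, b, hb, rfl⟩, h0, h1⟩
    rw [segment_eq_image] at ha hb
    obtain ⟨s, -, rfl⟩ := ha
    obtain ⟨u, -, rfl⟩ := hb
    simp only [Pi.add_apply, Pi.smul_apply, smul_eq_mul, Matrix.cons_val_zero,
      Matrix.cons_val_one] at h0 h1
    have hu : u = 1 := by linarith
    have hs : s = 1 := by linarith
    subst hu hs
    funext i; fin_cases i <;> norm_num
  · rintro rfl
    refine ⟨⟨_, right_mem_segment ℝ _ _, _, right_mem_segment ℝ _ _, ?_⟩, by simp⟩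
    funext i; fin_cases i <;> norm_num

theorem minkowski_sum_inter_line :
    ((segment ℝ (![0,0,0] : Fin 3 → ℝ) ![0,1,1] ∪
        segment ℝ (![0,1,1] : Fin 3 → ℝ) ![1,1,2]) +
      segment ℝ (![0,0,0] : Fin 3 → ℝ) ![-1,-1,2]) ∩
      {x : Fin 3 → ℝ | x 0 = 0 ∧ x 1 = 0} =
    {(![0,0,0] : Fin 3 → ℝ), ![0,0,4]} := by
  rw [Set.union_add, Set.union_inter_distrib_right, first_leg_add_segment_inter_line,
    second_leg_add_segment_inter_line, Set.singleton_union]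
end

section
/- The set A = {x ∈ [-1,1]^3 : x has at least one negative coordinate and at least one nonnegative coordinate} is monovex. -/
/-!
Every coordinate moves affinely from `x i` to `y i` during its own time window, so each
coordinate function is monotone and stays between `x i` and `y i`, hence in the box. With three
coordinates the windows can always be ordered so that at every moment some coordinate is
negative and some coordinate is nonnegative: each witness either keeps its sign while moving, or
has not yet left its starting value, or has already reached its target.
-/

open Set

section StagedPath

variable {ι : Type*} {n : ℕ} (s : ι → Fin n) (x y : ι → ℝ)

/-- Coordinate `i` moves during the time window `[s i / n, (s i + 1) / n]`. -/
noncomputable def stagedPath (t : unitInterval) : ι → ℝ :=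
  fun i => AffineMap.lineMap (x i) (y i) (projIcc (0 : ℝ) 1 zero_le_one (n * t - s i) : ℝ)

variable {s x y}

lemma stagedPath_apply_of_le {t : unitInterval} {i : ι} (h : n * (t : ℝ) ≤ s i) :
    stagedPath s x y t i = x i := by
  simp [stagedPath, projIcc_of_le_left _ (sub_nonpos.2 h)]

lemma stagedPath_apply_of_ge {t : unitInterval} {i : ι} (h : (s i : ℝ) + 1 ≤ n * t) :
    stagedPath s x y t i = y i := by
  simp [stagedPath, projIcc_of_right_le _ (le_sub_iff_add_le'.2 h)]

@[simp] lemma stagedPath_zero : stagedPath s x y 0 = x :=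
  funext fun i => stagedPath_apply_of_le (by simp)

@[simp] lemma stagedPath_one : stagedPath s x y 1 = y :=
  funext fun i => stagedPath_apply_of_ge (by simp; exact_mod_cast (s i).isLt)

lemma continuous_stagedPath : Continuous (stagedPath s x y) := by
  refine continuous_pi fun i => ?_
  simp only [stagedPath, AffineMap.lineMap_apply_ring']
  fun_prop

lemma monotone_or_antitone_stagedPath (i : ι) :
    Monotone (fun t => stagedPath s x y t i) ∨ Antitone (fun t => stagedPath s x y t i) := by
  have hτ : Monotone fun t : unitInterval => (projIcc (0 : ℝ) 1 zero_le_one (n * t - s i) : ℝ) :=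
    fun t t' h => monotone_projIcc _ <|
      sub_le_sub_right (mul_le_mul_of_nonneg_left (Subtype.mono_coe _ h) n.cast_nonneg) _
  rcases le_total (x i) (y i) with hxy | hxy
  · exact .inl ((AffineMap.lineMap_mono hxy).comp hτ)
  · exact .inr ((AffineMap.lineMap_anti hxy).comp_monotone hτ)

lemma stagedPath_mem {S : Set ℝ} (hS : S.OrdConnected) {i : ι} (hx : x i ∈ S) (hy : y i ∈ S)
    (t : unitInterval) : stagedPath s x y t i ∈ S :=
  hS.convex.lineMap_mem hx hy (projIcc _ _ _ _).2

lemma stagedPath_eq_left_or_eq_right {i j : ι} (h : s j < s i) (t : unitInterval) :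
    stagedPath s x y t i = x i ∨ stagedPath s x y t j = y j := by
  rcases le_or_gt (n * (t : ℝ)) (s i) with ht | ht
  · exact .inl (stagedPath_apply_of_le ht)
  · refine .inr (stagedPath_apply_of_ge ?_)
    have : ((s j : ℕ) : ℝ) + 1 ≤ (s i : ℕ) := by exact_mod_cast h
    linarith

lemma exists_stagedPath_mem {S : Set ℝ} (hS : S.OrdConnected) {i j : ι} (hx : x i ∈ S)
    (hy : y j ∈ S) (hij : i = j ∨ s j < s i) (t : unitInterval) :
    ∃ k, stagedPath s x y t k ∈ S := by
  rcases hij with rfl | hlt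
  · exact ⟨i, stagedPath_mem hS hx hy t⟩
  · rcases stagedPath_eq_left_or_eq_right hlt t with h | h
    · exact ⟨i, h ▸ hx⟩
    · exact ⟨j, h ▸ hy⟩

end StagedPath

/- Read `p i`, `q i` as "coordinate `i` of `x`, resp. `y`, is negative". If no coordinate changes
sign, any order works. If some `m` turns nonnegative, move first a `j` that is negative in `y`,
then `m`, then the remaining `c`, except when `c` is negative in `x`: then `j` is not, and the
order `m, j, c` works. A coordinate turning negative is handled symmetrically. -/
set_option synthInstance.maxSize 1024 in
lemma exists_stages_fin_three : ∀ p q : Fin 3 → Bool,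
    (∃ i, p i) → (∃ i, p i = false) → (∃ i, q i) → (∃ i, q i = false) →
    ∃ s : Fin 3 → Fin 3, (∃ i j, p i ∧ q j ∧ (i = j ∨ s j < s i)) ∧
      (∃ i j, p i = false ∧ q j = false ∧ (i = j ∨ s j < s i)) := by
  decide

theorem monovex_fin_three {I : Fin 3 → Set ℝ} {S : Set ℝ} (hI : ∀ i, (I i).OrdConnected)
    (hS : S.OrdConnected) (hSc : Sᶜ.OrdConnected) :
    Monovex {x : Fin 3 → ℝ | (∀ i, x i ∈ I i) ∧ (∃ i, x i ∈ S) ∧ ∃ i, x i ∉ S} := by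
  classical
  rintro x ⟨hxI, hxS, hxSc⟩ y ⟨hyI, hyS, hySc⟩
  obtain ⟨s, ⟨i, j, hi, hj, hij⟩, ⟨i', j', hi', hj', hij'⟩⟩ :=
    exists_stages_fin_three (fun i => decide (x i ∈ S)) (fun i => decide (y i ∈ S))
      (by simpa using hxS) (by simpa using hxSc) (by simpa using hyS) (by simpa using hySc)
  simp only [decide_eq_true_eq, decide_eq_false_iff_not] at hi hj hi' hj'
  refine ⟨stagedPath s x y, continuous_stagedPath, stagedPath_zero, stagedPath_one, fun t => ?_,
    monotone_or_antitone_stagedPath⟩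
  exact ⟨fun k => stagedPath_mem (hI k) (hxI k) (hyI k) t, exists_stagedPath_mem hS hi hj hij t,
    exists_stagedPath_mem hSc hi' hj' hij' t⟩

theorem example_set_monovex :
    Monovex {x : Fin 3 → ℝ | (∀ i, x i ∈ Set.Icc (-1 : ℝ) 1) ∧
      (∃ i, x i < 0) ∧ (∃ i, 0 ≤ x i)} := by
  simpa only [mem_Iio, not_lt] using
    monovex_fin_three (I := fun _ => Icc (-1) 1) (S := Iio 0) (fun _ => ordConnected_Icc)
      ordConnected_Iio (compl_Iio (a := (0 : ℝ)) ▸ ordConnected_Ici)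
end

section
/- The set A = {x ∈ [-1,1]^3 : x has at least one negative coordinate and at least one nonnegative coordinate} is not contractible. (Hence a monovex subset of ℝ^3 that is neither open nor closed need not be contractible.) -/
/-!
The map `x ↦ (x₀ - x₁) + (x₁ - x₂) i` kills exactly the diagonal, and no point of `A` lies on
the diagonal, so `x ↦ arg ((x₀ - x₁) + (x₁ - x₂) i)` is a continuous map from `A` to the circle.
Conversely, the unit circle embeds linearly into the plane `x₀ + x₁ + x₂ = 0` inside the cube, and
a nonzero point of that plane has coordinates of both signs. This makes the circle a retract of
`A`; a retract of a contractible space is contractible, but the circle is not, since its universal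
cover `ℝ → ℝ/pℤ` shows that its fundamental group is `ℤ`.
-/

open Complex Set

theorem AddCircle.not_contractibleSpace {p : ℝ} (hp : p ≠ 0) :
    ¬ ContractibleSpace (AddCircle p) := by
  intro _
  have : Subsingleton (Multiplicative (AddSubgroup.zmultiples p))ᵐᵒᵖ :=
    ((AddCircle.isAddQuotientCoveringMap_coe p).fundamentalGroupEquiv
      (x := ((0 : ℝ) : AddCircle p)) ⟨0, rfl⟩).symm.injective.subsingleton
  have hne : (⟨p, AddSubgroup.mem_zmultiples p⟩ : AddSubgroup.zmultiples p) ≠ 0 := by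
    simpa [← Subtype.coe_inj] using hp
  exact hne (Multiplicative.ofAdd.injective (MulOpposite.op_injective (Subsingleton.elim _ _)))

theorem ContractibleSpace.of_leftInverse {X Y : Type*} [TopologicalSpace X] [TopologicalSpace Y]
    [ContractibleSpace X] [Nonempty Y] (i : C(Y, X)) (r : C(X, Y))
    (h : Function.LeftInverse r i) : ContractibleSpace Y := by
  rw [contractible_iff_id_nullhomotopic]
  convert ((id_nullhomotopic X).comp_right r).comp_left i
  ext y
  exact (h y).symm

def mixedSignCube (ι : Type*) : Set (ι → ℝ) :=
  {x | (∀ i, x i ∈ Icc (-1 : ℝ) 1) ∧ (∃ i, x i < 0) ∧ (∃ i, 0 ≤ x i)}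

theorem mem_mixedSignCube_of_sum_eq_zero {ι : Type*} [Fintype ι] {x : ι → ℝ}
    (hx : ∀ i, x i ∈ Icc (-1 : ℝ) 1) (hsum : ∑ i, x i = 0) (hne : x ≠ 0) :
    x ∈ mixedSignCube ι := by
  refine ⟨hx, ?_, ?_⟩
  · by_contra! hnonneg
    exact hne (funext ((Finset.sum_eq_zero_iff_of_nonneg fun i _ => hnonneg i).1 hsum ·
      (Finset.mem_univ _)))
  · by_contra! hneg
    obtain ⟨i, -⟩ := Function.ne_iff.1 hne
    exact (Finset.sum_neg (fun i _ => hneg i) ⟨i, Finset.mem_univ i⟩).ne hsum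

noncomputable section

def coordDiffs (x : Fin 3 → ℝ) : ℂ := (x 0 - x 1 : ℝ) + (x 1 - x 2 : ℝ) * I

theorem continuous_coordDiffs : Continuous coordDiffs := by
  unfold coordDiffs
  fun_prop

theorem coordDiffs_eq_zero_iff {x : Fin 3 → ℝ} : coordDiffs x = 0 ↔ x 0 = x 1 ∧ x 1 = x 2 := by
  simp [coordDiffs, Complex.ext_iff, sub_eq_zero]

theorem coordDiffs_ne_zero {x : Fin 3 → ℝ} (hx : x ∈ mixedSignCube (Fin 3)) :
    coordDiffs x ≠ 0 := by
  obtain ⟨-, ⟨i, hi⟩, ⟨j, hj⟩⟩ := hx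
  rw [Ne, coordDiffs_eq_zero_iff]
  rintro ⟨h01, h12⟩
  fin_cases i <;> fin_cases j <;> simp at hi hj <;> linarith

/-- Solves `x₀ - x₁ = re z`, `x₁ - x₂ = im z`, `x₀ + x₁ + x₂ = 0`. -/
def sumZeroSection (z : ℂ) : Fin 3 → ℝ :=
  ![(2 * z.re + z.im) / 3, (z.im - z.re) / 3, -(z.re + 2 * z.im) / 3]

theorem continuous_sumZeroSection : Continuous sumZeroSection := by
  unfold sumZeroSection
  fun_prop

theorem coordDiffs_sumZeroSection (z : ℂ) : coordDiffs (sumZeroSection z) = z := by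
  apply Complex.ext <;> simp [coordDiffs, sumZeroSection] <;> ring

theorem sumZeroSection_mem_mixedSignCube {z : ℂ} (hz : ‖z‖ = 1) :
    sumZeroSection z ∈ mixedSignCube (Fin 3) := by
  have hre := abs_le.1 ((abs_re_le_norm z).trans hz.le)
  have him := abs_le.1 ((abs_im_le_norm z).trans hz.le)
  refine mem_mixedSignCube_of_sum_eq_zero (fun i => ?_) ?_ ?_
  · fin_cases i <;> simp [sumZeroSection] <;> constructor <;> linarith
  · simp [sumZeroSection, Fin.sum_univ_three]
    ring
  · intro h
    refine one_ne_zero (hz.symm.trans ?_)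
    rw [← coordDiffs_sumZeroSection z, h]
    simp [coordDiffs]

def argCoordDiffs : C(mixedSignCube (Fin 3), Real.Angle) where
  toFun x := arg (coordDiffs x)
  continuous_toFun := continuous_iff_continuousAt.2 fun x =>
    ((continuousAt_arg_coe_angle (coordDiffs_ne_zero x.2)).comp
      continuous_coordDiffs.continuousAt).comp continuous_subtype_val.continuousAt

def angleLoop : C(Real.Angle, mixedSignCube (Fin 3)) where
  toFun θ := ⟨sumZeroSection θ.toCircle, sumZeroSection_mem_mixedSignCube (Circle.norm_coe _)⟩
  continuous_toFun := (continuous_sumZeroSection.comp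
    (continuous_subtype_val.comp AddCircle.homeomorphCircle'.continuous)).subtype_mk _

theorem argCoordDiffs_leftInverse_angleLoop : Function.LeftInverse argCoordDiffs angleLoop :=
  fun θ => by
    change (arg (coordDiffs (sumZeroSection θ.toCircle)) : Real.Angle) = θ
    rw [coordDiffs_sumZeroSection, Real.Angle.arg_toCircle]

end

theorem example_set_not_contractible :
    ¬ ContractibleSpace ({x : Fin 3 → ℝ | (∀ i, x i ∈ Set.Icc (-1 : ℝ) 1) ∧
      (∃ i, x i < 0) ∧ (∃ i, 0 ≤ x i)} : Set (Fin 3 → ℝ)) := by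
  intro h
  change ContractibleSpace (mixedSignCube (Fin 3)) at h
  exact AddCircle.not_contractibleSpace Real.two_pi_pos.ne'
    (ContractibleSpace.of_leftInverse angleLoop argCoordDiffs argCoordDiffs_leftInverse_angleLoop)
end

section
/- Let X ⊆ ℝ^n and let F : X → Set(ℝ^m) be a set-valued function whose graph {(x,y) : y ∈ F(x)} is open in X × ℝ^m and whose values F(x) are nonempty and monovex. Then F admits a continuous selection: there is a continuous function f : X → ℝ^m with f(x) ∈ F(x) for every x ∈ X. -/
theorem apply_eq_of_monotone_or_antitone {α β : Type*} [Preorder α] [PartialOrder β]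
    {f : α → β} (hf : Monotone f ∨ Antitone f) {a b t : α} (hat : a ≤ t) (htb : t ≤ b)
    (hab : f a = f b) : f t = f a := by
  rcases hf with hf | hf
  · exact le_antisymm (hab ▸ hf htb) (hf hat)
  · exact le_antisymm (hf hat) (hab ▸ hf htb)

namespace Monovex

variable {m : ℕ} {A : Set (Fin (m + 1) → ℝ)}

theorem image_init (hA : Monovex A) : Monovex (Fin.init '' A) := by
  rintro _ ⟨x, hx, rfl⟩ _ ⟨y, hy, rfl⟩
  obtain ⟨γ, hγ, hγ0, hγ1, hγA, hγmono⟩ := hA x hx y hy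
  exact ⟨fun t => Fin.init (γ t), hγ.finInit, congrArg Fin.init hγ0, congrArg Fin.init hγ1,
    fun t => ⟨γ t, hγA t, rfl⟩, fun i => hγmono i.castSucc⟩

theorem ordConnected_snoc_fiber (hA : Monovex A) (w : Fin m → ℝ) :
    Set.OrdConnected {s : ℝ | (Fin.snoc w s : Fin (m + 1) → ℝ) ∈ A} := by
  refine ⟨fun a ha b hb s hs => ?_⟩
  obtain ⟨γ, hγ, hγ0, hγ1, hγA, hγmono⟩ := hA _ ha _ hb
  have hlast : s ∈ Set.Icc (γ 0 (Fin.last m)) (γ 1 (Fin.last m)) := by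
    simpa [hγ0, hγ1] using hs
  obtain ⟨t, ht⟩ := intermediate_value_univ 0 1 ((continuous_apply _).comp hγ) hlast
  have hinit : ∀ j : Fin m, γ t j.castSucc = w j := fun j => by
    rw [apply_eq_of_monotone_or_antitone (hγmono j.castSucc) unitInterval.nonneg'
      unitInterval.le_one' (by simp [hγ0, hγ1]), hγ0, Fin.snoc_castSucc]
  have hγt : γ t = Fin.snoc w s := funext fun i =>
    Fin.lastCases (by simpa using ht) (fun j => by simpa using hinit j) i
  simpa [← hγt] using hγA t

end Monovex

section OpenGraph

variable {Y E : Type*} [TopologicalSpace Y] [TopologicalSpace E] {m : ℕ}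
  {F : Y → Set (Fin (m + 1) → E)}

theorem isOpen_graph_image_init (hF : IsOpen {p : Y × (Fin (m + 1) → E) | p.2 ∈ F p.1}) :
    IsOpen {p : Y × (Fin m → E) | p.2 ∈ Fin.init '' F p.1} := by
  have hgraph : {p : Y × (Fin m → E) | p.2 ∈ Fin.init '' F p.1} =
      ⋃ e : E, (fun p : Y × (Fin m → E) => (p.1, (Fin.snoc p.2 e : Fin (m + 1) → E))) ⁻¹'
        {p | p.2 ∈ F p.1} := by
    ext ⟨y, w⟩
    simp only [Set.mem_ofPred_eq, Set.mem_image, Set.mem_iUnion, Set.mem_preimage]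
    constructor
    · rintro ⟨v, hv, rfl⟩
      exact ⟨v (Fin.last m), by rwa [Fin.snoc_init_self]⟩
    · rintro ⟨e, he⟩
      exact ⟨_, he, Fin.init_snoc _ _⟩
  rw [hgraph]
  exact isOpen_iUnion fun e => hF.preimage (by fun_prop)

theorem isOpen_graph_snoc_fiber (hF : IsOpen {p : Y × (Fin (m + 1) → E) | p.2 ∈ F p.1})
    {g : Y → Fin m → E} (hg : Continuous g) :
    IsOpen {p : Y × E | (Fin.snoc (g p.1) p.2 : Fin (m + 1) → E) ∈ F p.1} :=
  hF.preimage (f := fun p : Y × E => (p.1, (Fin.snoc (g p.1) p.2 : Fin (m + 1) → E)))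
    (by fun_prop)

end OpenGraph

theorem exists_continuous_forall_mem_convex_of_isOpen_graph {Y E : Type*} [TopologicalSpace Y]
    [NormalSpace Y] [ParacompactSpace Y] [AddCommGroup E] [Module ℝ E] [TopologicalSpace E]
    [ContinuousAdd E] [ContinuousSMul ℝ E] {t : Y → Set E}
    (ht : IsOpen {p : Y × E | p.2 ∈ t p.1}) (hne : ∀ y, (t y).Nonempty)
    (hconv : ∀ y, Convex ℝ (t y)) : ∃ g : C(Y, E), ∀ y, g y ∈ t y :=
  exists_continuous_forall_mem_convex_of_local_const hconv fun y =>
    let ⟨c, hc⟩ := hne y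
    ⟨c, (ht.preimage (Continuous.prodMk_left c)).eventually_mem hc⟩

theorem Monovex.exists_continuous_selection {Y : Type*} [TopologicalSpace Y] [NormalSpace Y]
    [ParacompactSpace Y] {m : ℕ} {F : Y → Set (Fin m → ℝ)}
    (hF : IsOpen {p : Y × (Fin m → ℝ) | p.2 ∈ F p.1}) (hne : ∀ y, (F y).Nonempty)
    (hmv : ∀ y, Monovex (F y)) : ∃ f : Y → Fin m → ℝ, Continuous f ∧ ∀ y, f y ∈ F y := by
  induction m with
  | zero =>
    refine ⟨fun _ => 0, continuous_const, fun y => ?_⟩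
    obtain ⟨v, hv⟩ := hne y
    rwa [Subsingleton.elim v 0] at hv
  | succ m ih =>
    obtain ⟨g, hg, hgF⟩ := ih (isOpen_graph_image_init hF) (fun y => (hne y).image _)
      fun y => (hmv y).image_init
    have hfiber_ne : ∀ y, {s : ℝ | (Fin.snoc (g y) s : Fin (m + 1) → ℝ) ∈ F y}.Nonempty := by
      intro y
      obtain ⟨v, hv, hvg⟩ := hgF y
      exact ⟨v (Fin.last m), by rwa [Set.mem_ofPred_eq, ← hvg, Fin.snoc_init_self]⟩
    obtain ⟨h, hh⟩ := exists_continuous_forall_mem_convex_of_isOpen_graph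
      (isOpen_graph_snoc_fiber hF hg) hfiber_ne
      fun y => ((hmv y).ordConnected_snoc_fiber (g y)).convex
    exact ⟨fun y => Fin.snoc (g y) (h y), hg.finSnoc h.continuous, hh⟩

theorem monovex_michael_selection {n m : ℕ} (X : Set (Fin n → ℝ))
    (F : (Fin n → ℝ) → Set (Fin m → ℝ))
    (hopen : IsOpen {p : X × (Fin m → ℝ) | p.2 ∈ F p.1})
    (hval : ∀ x ∈ X, (F x).Nonempty ∧ Monovex (F x)) :
    ∃ f : (Fin n → ℝ) → (Fin m → ℝ), ContinuousOn f X ∧ ∀ x ∈ X, f x ∈ F x := by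
  obtain ⟨f, hf, hfF⟩ := Monovex.exists_continuous_selection hopen
    (fun x : X => (hval x x.2).1) fun x => (hval x x.2).2
  have hextend : ∀ x : X, Function.extend Subtype.val f 0 x = f x :=
    Subtype.val_injective.extend_apply f 0
  refine ⟨Function.extend Subtype.val f 0, ?_, fun x hx => hextend ⟨x, hx⟩ ▸ hfF ⟨x, hx⟩⟩
  rw [continuousOn_iff_continuous_domRestrict]
  exact hf.congr fun x => (hextend x).symm
end

section
/- Let A ⊆ ℝ^n be a nonempty closed set and suppose g : ℝ^n → ℝ^n is a continuous function that is the identity on A and satisfies d_∞(g(x), x) ≤ (4/3)·d_∞(x, A) and d_∞(g(x), A) ≤ d_∞(x, A)/9 for all x ∈ ℝ^n. Then the iterates g^k converge locally uniformly to a continuous retraction h : ℝ^n → A (i.e., h is continuous, h(ℝ^n) ⊆ A, and h is the identity on A). -/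
theorem tendstoLocallyUniformly_of_dist_le_mul {ι α β : Type*} [TopologicalSpace α]
    [PseudoMetricSpace β] {l : Filter ι} {F : ι → α → β} {f : α → β} {φ : α → ℝ}
    {u : ι → ℝ} (hφ : Continuous φ) (hu0 : ∀ k, 0 ≤ u k) (hu : Filter.Tendsto u l (nhds 0))
    (hdist : ∀ k x, dist (F k x) (f x) ≤ φ x * u k) :
    TendstoLocallyUniformly F f l := by
  rw [Metric.tendstoLocallyUniformly_iff]
  intro ε hε x
  set M := |φ x| + 1
  have hM : 0 < M := by positivity
  have hnear : ∀ᶠ y in nhds x, φ y < φ x + 1 :=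
    hφ.continuousAt.eventually_lt continuousAt_const (lt_add_one _)
  refine ⟨_, hnear, ?_⟩
  filter_upwards [hu.eventually (gt_mem_nhds (div_pos hε hM))] with k hk y hy
  calc dist (f y) (F k y) = dist (F k y) (f y) := dist_comm _ _
    _ ≤ φ y * u k := hdist k y
    _ ≤ M * u k := by gcongr; exacts [hu0 k, hy.le.trans (by simp [M, le_abs_self])]
    _ < ε := (lt_div_iff₀' hM).mp hk

open Metric

section Iterates

variable {X : Type*} [MetricSpace X] {A : Set X} {g : X → X} {C r : ℝ}

theorem infDist_iterate_le (hr : 0 ≤ r) (hcontract : ∀ x, infDist (g x) A ≤ r * infDist x A)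
    (x : X) (k : ℕ) : infDist (g^[k] x) A ≤ r ^ k * infDist x A := by
  induction k with
  | zero => simp
  | succ k ih =>
    rw [Function.iterate_succ_apply', pow_succ', mul_assoc]
    exact (hcontract _).trans (mul_le_mul_of_nonneg_left ih hr)

theorem dist_iterate_succ_le (hC : 0 ≤ C) (hr : 0 ≤ r)
    (hnear : ∀ x, dist (g x) x ≤ C * infDist x A)
    (hcontract : ∀ x, infDist (g x) A ≤ r * infDist x A) (x : X) (k : ℕ) :
    dist (g^[k] x) (g^[k + 1] x) ≤ C * infDist x A * r ^ k := by
  rw [dist_comm, Function.iterate_succ_apply']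
  calc dist (g (g^[k] x)) (g^[k] x) ≤ C * infDist (g^[k] x) A := hnear _
    _ ≤ C * (r ^ k * infDist x A) := by gcongr; exact infDist_iterate_le hr hcontract x k
    _ = C * infDist x A * r ^ k := by ring

theorem exists_dist_iterate_le [CompleteSpace X] (hC : 0 ≤ C) (hr : 0 ≤ r) (hr1 : r < 1)
    (hnear : ∀ x, dist (g x) x ≤ C * infDist x A)
    (hcontract : ∀ x, infDist (g x) A ≤ r * infDist x A) :
    ∃ h : X → X, ∀ k x, dist (g^[k] x) (h x) ≤ C / (1 - r) * infDist x A * r ^ k := by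
  have hstep := dist_iterate_succ_le hC hr hnear hcontract
  choose h hh using fun x ↦
    cauchySeq_tendsto_of_complete (cauchySeq_of_le_geometric _ _ hr1 (hstep x))
  refine ⟨h, fun k x ↦ ?_⟩
  calc dist (g^[k] x) (h x) ≤ C * infDist x A * r ^ k / (1 - r) :=
        dist_le_of_le_geometric_of_tendsto _ _ hr1 (hstep x) (hh x) k
    _ = C / (1 - r) * infDist x A * r ^ k := by ring

theorem exists_retraction_tendstoLocallyUniformly_iterate [CompleteSpace X] (hne : A.Nonempty)
    (hA : IsClosed A) (hg : Continuous g) (hC : 0 ≤ C) (hr : 0 ≤ r) (hr1 : r < 1)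
    (hnear : ∀ x, dist (g x) x ≤ C * infDist x A)
    (hcontract : ∀ x, infDist (g x) A ≤ r * infDist x A) :
    ∃ h : X → X, Continuous h ∧ (∀ x, h x ∈ A) ∧ (∀ x ∈ A, h x = x) ∧
      TendstoLocallyUniformly (fun k x ↦ g^[k] x) h Filter.atTop := by
  obtain ⟨h, hrate⟩ := exists_dist_iterate_le hC hr hr1 hnear hcontract
  have hpow : Filter.Tendsto (r ^ ·) Filter.atTop (nhds 0) :=
    tendsto_pow_atTop_nhds_zero_of_lt_one hr hr1
  have hlim : TendstoLocallyUniformly (fun k x ↦ g^[k] x) h Filter.atTop :=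
    tendstoLocallyUniformly_of_dist_le_mul (φ := fun x ↦ C / (1 - r) * infDist x A)
      (by fun_prop) (fun k ↦ pow_nonneg hr k) hpow hrate
  refine ⟨h, hlim.continuous (.of_forall fun k ↦ hg.iterate k), fun x ↦ ?_, fun x hx ↦ ?_, hlim⟩
  · have hle : ∀ k, infDist (h x) A ≤ (C / (1 - r) + 1) * infDist x A * r ^ k := fun k ↦
      calc infDist (h x) A ≤ infDist (g^[k] x) A + dist (h x) (g^[k] x) :=
            infDist_le_infDist_add_dist
        _ ≤ r ^ k * infDist x A + C / (1 - r) * infDist x A * r ^ k := by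
          rw [dist_comm]; exact add_le_add (infDist_iterate_le hr hcontract x k) (hrate k x)
        _ = (C / (1 - r) + 1) * infDist x A * r ^ k := by ring
    have hzero : infDist (h x) A = 0 :=
      le_antisymm (ge_of_tendsto' (by simpa using hpow.const_mul _) hle) infDist_nonneg
    exact (hA.mem_iff_infDist_zero hne).mpr hzero
  · simpa [infDist_zero_of_mem hx, eq_comm] using hrate 0 x

end Iterates

theorem iterates_converge_to_retraction_general {n : ℕ} (A : Set (Fin n → ℝ))
    (hne : A.Nonempty) (hc : IsClosed A) (g : (Fin n → ℝ) → (Fin n → ℝ))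
    (hg : Continuous g)
    (hnear : ∀ x, dist (g x) x ≤ (4 / 3) * Metric.infDist x A)
    (hcontract : ∀ x, Metric.infDist (g x) A ≤ Metric.infDist x A / 9) :
    ∃ h : (Fin n → ℝ) → (Fin n → ℝ), Continuous h ∧ (∀ x, h x ∈ A) ∧
      (∀ x ∈ A, h x = x) ∧
      TendstoLocallyUniformly (fun k x => g^[k] x) h Filter.atTop :=
  exists_retraction_tendstoLocallyUniformly_iterate (r := 1 / 9) hne hc hg (by norm_num)
    (by norm_num) (by norm_num) hnear fun x ↦ (hcontract x).trans_eq (by ring)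

theorem iterates_converge_to_retraction {n : ℕ} (A : Set (Fin n → ℝ))
    (hne : A.Nonempty) (hc : IsClosed A) (g : (Fin n → ℝ) → (Fin n → ℝ))
    (hg : Continuous g) (hid : ∀ x ∈ A, g x = x)
    (hnear : ∀ x, dist (g x) x ≤ (4 / 3) * Metric.infDist x A)
    (hcontract : ∀ x, Metric.infDist (g x) A ≤ Metric.infDist x A / 9) :
    ∃ h : (Fin n → ℝ) → (Fin n → ℝ), Continuous h ∧ (∀ x, h x ∈ A) ∧
      (∀ x ∈ A, h x = x) ∧
      TendstoLocallyUniformly (fun k x => g^[k] x) h Filter.atTop :=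
  iterates_converge_to_retraction_general A hne hc g hg hnear hcontract
end

section
/- The set A = {(0,0)} ∪ ⋃_{k=0}^∞ [1/2^{k+1}, 1/2^k]² ⊆ ℝ² is monovex. -/
/-!
Write the set as `{0}` together with the cubes `Q k = [2^-(k+1), 2^-k]^ι`. Each cube is convex,
and the diagonal from `0` to `(1, …, 1)` lies in the set because the cubes cover it. For `k < m`
the cube `Q m` lies coordinatewise below `Q k`, and a point of `Q m` is joined to a point of `Q k`
by a path that increases in every coordinate: straight to the top corner of `Q m`, up the diagonal
to the bottom corner of `Q k`, straight to the target. The origin is joined to a point of `Q k` in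
the same way, and two points of one cube by the segment between them.
-/

open Set unitInterval

section MonotonePath

variable {X : Type*} [TopologicalSpace X] [Preorder X]

def MonotoneJoinedIn (A : Set X) (x y : X) : Prop :=
  ∃ γ : Path x y, Monotone γ ∧ ∀ t, γ t ∈ A

theorem Path.monotone_trans {x y z : X} {γ : Path x y} {γ' : Path y z} (hγ : Monotone γ)
    (hγ' : Monotone γ') : Monotone (γ.trans γ') := by
  have hext : Monotone γ.extend := Monotone.IccExtend _ hγ
  have hext' : Monotone γ'.extend := Monotone.IccExtend _ hγ'
  intro s t hst
  have hst : (s : ℝ) ≤ t := hst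
  change (if (s : ℝ) ≤ 1 / 2 then _ else _) ≤ (if (t : ℝ) ≤ 1 / 2 then _ else _)
  split_ifs with hs ht ht
  · exact hext (by linarith)
  · calc γ.extend (2 * s) ≤ γ.extend 1 := hext (by linarith)
      _ = γ'.extend 0 := by rw [Path.extend_one, Path.extend_zero]
      _ ≤ γ'.extend (2 * t - 1) := hext' (by linarith)
  · linarith
  · exact hext' (by linarith)

theorem MonotoneJoinedIn.trans {A : Set X} {x y z : X} (h : MonotoneJoinedIn A x y)
    (h' : MonotoneJoinedIn A y z) : MonotoneJoinedIn A x z := by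
  obtain ⟨γ, hγ, hγA⟩ := h
  obtain ⟨γ', hγ', hγ'A⟩ := h'
  refine ⟨γ.trans γ', Path.monotone_trans hγ hγ', fun t => ?_⟩
  have hrange : range (γ.trans γ') ⊆ A := by
    rw [Path.trans_range]
    exact union_subset (range_subset_iff.2 hγA) (range_subset_iff.2 hγ'A)
  exact hrange (mem_range_self t)

end MonotonePath

theorem monotoneJoinedIn_of_segment_subset {E : Type*} [AddCommGroup E] [Module ℝ E]
    [TopologicalSpace E] [ContinuousAdd E] [ContinuousSMul ℝ E] [Preorder E] [AddRightMono E]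
    [SMulPosMono ℝ E] {A : Set E} {x y : E} (hxy : x ≤ y) (h : segment ℝ x y ⊆ A) :
    MonotoneJoinedIn A x y :=
  ⟨Path.segment x y, (AffineMap.lineMap_mono hxy).comp (Subtype.mono_coe _),
    fun t => h (Path.range_segment x y ▸ mem_range_self t)⟩

section Monovex

variable {ι : Type*}

def MonovexJoinedIn (A : Set (ι → ℝ)) (x y : ι → ℝ) : Prop :=
  ∃ γ : unitInterval → ι → ℝ, Continuous γ ∧ γ 0 = x ∧ γ 1 = y ∧ (∀ t, γ t ∈ A) ∧
    ∀ i, Monotone (fun t => γ t i) ∨ Antitone (fun t => γ t i)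

variable {A : Set (ι → ℝ)} {x y : ι → ℝ}

theorem MonotoneJoinedIn.monovexJoinedIn (h : MonotoneJoinedIn A x y) :
    MonovexJoinedIn A x y := by
  obtain ⟨γ, hγ, hγA⟩ := h
  exact ⟨γ, γ.continuous, γ.source, γ.target, hγA, fun i => Or.inl fun _ _ hst => hγ hst i⟩

theorem MonotoneJoinedIn.monovexJoinedIn_symm (h : MonotoneJoinedIn A x y) :
    MonovexJoinedIn A y x := by
  obtain ⟨γ, hγ, hγA⟩ := h
  exact ⟨γ.symm, γ.symm.continuous, γ.symm.source, γ.symm.target, fun _ => hγA _,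
    fun i => Or.inr fun _ _ hst => hγ (strictAnti_symm.antitone hst) i⟩

theorem monovexJoinedIn_of_segment_subset (h : segment ℝ x y ⊆ A) : MonovexJoinedIn A x y := by
  refine ⟨Path.segment x y, (Path.segment x y).continuous, (Path.segment x y).source,
    (Path.segment x y).target, fun t => h (Path.range_segment x y ▸ mem_range_self t),
    fun i => ?_⟩
  have hcoord : (fun t : I => Path.segment x y t i) =
      AffineMap.lineMap (x i) (y i) ∘ ((↑) : I → ℝ) := by
    ext t
    simp [AffineMap.lineMap_apply_module]
  rw [hcoord]
  rcases le_total (x i) (y i) with hle | hle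
  · exact Or.inl ((AffineMap.lineMap_mono hle).comp (Subtype.mono_coe _))
  · exact Or.inr ((AffineMap.lineMap_anti hle).comp_monotone (Subtype.mono_coe _))

end Monovex

section DyadicCubes

variable (ι : Type*)

def dyadicCube (k : ℕ) : Set (ι → ℝ) :=
  Set.pi univ fun _ => Icc ((1 : ℝ) / 2 ^ (k + 1)) (1 / 2 ^ k)

def dyadicCubes : Set (ι → ℝ) :=
  {0} ∪ ⋃ k : ℕ, dyadicCube ι k

variable {ι}

theorem convex_dyadicCube (k : ℕ) : Convex ℝ (dyadicCube ι k) :=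
  convex_pi fun _ _ => convex_Icc _ _

theorem dyadicCube_subset_dyadicCubes (k : ℕ) : dyadicCube ι k ⊆ dyadicCubes ι :=
  fun _ hx => Or.inr (mem_iUnion_of_mem k hx)

theorem one_div_two_pow_succ_le (k : ℕ) : (1 : ℝ) / 2 ^ (k + 1) ≤ 1 / 2 ^ k :=
  one_div_pow_le_one_div_pow_of_le one_le_two k.le_succ

theorem one_div_two_pow_le_one (k : ℕ) : (1 : ℝ) / 2 ^ k ≤ 1 :=
  div_le_one_of_le₀ (one_le_pow₀ one_le_two) (by positivity)

theorem const_mem_dyadicCubes {s : ℝ} (hs₀ : 0 ≤ s) (hs₁ : s ≤ 1) :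
    (fun _ => s : ι → ℝ) ∈ dyadicCubes ι := by
  rcases hs₀.eq_or_lt with rfl | hpos
  · exact Or.inl rfl
  obtain ⟨k, hlow, hup⟩ :=
    exists_nat_pow_near_of_lt_one hpos hs₁ (by norm_num : (0 : ℝ) < 1 / 2) (by norm_num)
  rw [one_div_pow] at hlow hup
  exact dyadicCube_subset_dyadicCubes k fun _ _ => ⟨hlow.le, hup⟩

theorem segment_const_subset_dyadicCubes {a b : ℝ} (ha : a ∈ Icc 0 1) (hb : b ∈ Icc 0 1) :
    segment ℝ (fun _ => a : ι → ℝ) (fun _ => b) ⊆ dyadicCubes ι := by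
  rintro _ ⟨α, β, hα, hβ, hαβ, rfl⟩
  have hmem : α • a + β • b ∈ Icc (0 : ℝ) 1 := convex_Icc 0 1 ha hb hα hβ hαβ
  exact const_mem_dyadicCubes hmem.1 hmem.2

theorem monotoneJoinedIn_const {a b : ℝ} (ha : 0 ≤ a) (hab : a ≤ b) (hb : b ≤ 1) :
    MonotoneJoinedIn (dyadicCubes ι) (fun _ => a) (fun _ => b) :=
  monotoneJoinedIn_of_segment_subset (fun _ => hab)
    (segment_const_subset_dyadicCubes ⟨ha, hab.trans hb⟩ ⟨ha.trans hab, hb⟩)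

variable {k : ℕ} {x : ι → ℝ}

theorem monotoneJoinedIn_top_corner (hx : x ∈ dyadicCube ι k) :
    MonotoneJoinedIn (dyadicCubes ι) x (fun _ => 1 / 2 ^ k) := by
  have htop : (fun _ => 1 / 2 ^ k : ι → ℝ) ∈ dyadicCube ι k :=
    fun _ _ => ⟨one_div_two_pow_succ_le k, le_rfl⟩
  exact monotoneJoinedIn_of_segment_subset (fun i => (hx i trivial).2)
    (((convex_dyadicCube k).segment_subset hx htop).trans (dyadicCube_subset_dyadicCubes k))

theorem monotoneJoinedIn_bottom_corner (hx : x ∈ dyadicCube ι k) :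
    MonotoneJoinedIn (dyadicCubes ι) (fun _ => 1 / 2 ^ (k + 1)) x := by
  have hbot : (fun _ => 1 / 2 ^ (k + 1) : ι → ℝ) ∈ dyadicCube ι k :=
    fun _ _ => ⟨le_rfl, one_div_two_pow_succ_le k⟩
  exact monotoneJoinedIn_of_segment_subset (fun i => (hx i trivial).1)
    (((convex_dyadicCube k).segment_subset hbot hx).trans (dyadicCube_subset_dyadicCubes k))

theorem monotoneJoinedIn_zero_of_mem_dyadicCube (hx : x ∈ dyadicCube ι k) :
    MonotoneJoinedIn (dyadicCubes ι) 0 x :=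
  (monotoneJoinedIn_const le_rfl (by positivity) (one_div_two_pow_le_one _)).trans
    (monotoneJoinedIn_bottom_corner hx)

theorem monotoneJoinedIn_of_mem_dyadicCube_of_lt {m : ℕ} {y : ι → ℝ} (hkm : k < m)
    (hy : y ∈ dyadicCube ι m) (hx : x ∈ dyadicCube ι k) :
    MonotoneJoinedIn (dyadicCubes ι) y x :=
  have hcorners : (1 : ℝ) / 2 ^ m ≤ 1 / 2 ^ (k + 1) :=
    one_div_pow_le_one_div_pow_of_le one_le_two hkm
  ((monotoneJoinedIn_top_corner hy).trans
    (monotoneJoinedIn_const (by positivity) hcorners (one_div_two_pow_le_one _))).trans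
    (monotoneJoinedIn_bottom_corner hx)

end DyadicCubes

theorem monovex_dyadicCubes (ι : Type*) : Monovex (dyadicCubes ι) := by
  rintro x (rfl | hx) y (rfl | hy)
  · exact monovexJoinedIn_of_segment_subset (by simp [segment_same, dyadicCubes])
  · obtain ⟨m, hm⟩ := mem_iUnion.1 hy
    exact (monotoneJoinedIn_zero_of_mem_dyadicCube hm).monovexJoinedIn
  · obtain ⟨k, hk⟩ := mem_iUnion.1 hx
    exact (monotoneJoinedIn_zero_of_mem_dyadicCube hk).monovexJoinedIn_symm
  obtain ⟨k, hk⟩ := mem_iUnion.1 hx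
  obtain ⟨m, hm⟩ := mem_iUnion.1 hy
  rcases lt_trichotomy k m with hkm | rfl | hmk
  · exact (monotoneJoinedIn_of_mem_dyadicCube_of_lt hkm hm hk).monovexJoinedIn_symm
  · exact monovexJoinedIn_of_segment_subset
      (((convex_dyadicCube k).segment_subset hk hm).trans (dyadicCube_subset_dyadicCubes k))
  · exact (monotoneJoinedIn_of_mem_dyadicCube_of_lt hmk hk hm).monovexJoinedIn

theorem squares_set_monovex :
    Monovex ({(![0,0] : Fin 2 → ℝ)} ∪
      ⋃ k : ℕ, Set.pi Set.univ fun _ : Fin 2 =>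
        Set.Icc ((1 : ℝ) / 2 ^ (k + 1)) (1 / 2 ^ k)) := by
  rw [show (![0, 0] : Fin 2 → ℝ) = 0 by ext i; fin_cases i <;> rfl]
  exact monovex_dyadicCubes (Fin 2)
end
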